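/- arXiv:1306.4009 — 9 statements merged into one kernel-verified Lean document; each statement's English description precedes it below -/
import Mathlib

section
/- Let d > 0, let v > 0 be a noise variance, and let N ≥ 1. Index 4-PAM symbols by Fin 4 with points s_i = (2·i − 3)·d. Let x, x̂ : Fin N → Fin 4 be two distinct symbol sequences. Let P = Measure.pi (fun _ : Fin N => gaussianReal 0 v) be the law of the i.i.d. Gaussian noise vector z. Then P.real { z | Σ_k ( 2·(s_{x k} − s_{x̂ k})·(s_{x k} + z k) + s_{x̂ k}² − s_{x k}² ) < 0 } = Q( (Σ_k (s_{x k} − s_{x̂ k})²) / √(Σ_k 4·(s_{x k} − s_{x̂ k})²·v) ), and this argument equals d·√(Σ_k ((x k : ℝ) − (x̂ k : ℝ))²)/√v. (This is the exact pairwise error probability of the maximum-likelihood symbol-wise decoder over the AWGN channel.) -/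
/-!
Writing `a = s ∘ x - s ∘ xh`, the metric difference is `‖a‖² + ⟨2a, z⟩`. A linear form of
i.i.d. centred Gaussians is a centred Gaussian whose variance is the sum of the variances, so
`⟨2a, z⟩ ∼ 𝒩(0, 4‖a‖²v)` and the error event has probability `Q(‖a‖² / √(4‖a‖²v)) = Q(‖a‖ / (2√v))`.
For the 4-PAM constellation `a = 2d (x - xh)`, which gives the closed form of the argument.
-/

open MeasureTheory ProbabilityTheory Real Finset
open scoped NNReal

lemma map_sum_eq_gaussianReal_of_iIndepFun {Ω ι : Type*} {mΩ : MeasurableSpace Ω}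
    {P : Measure Ω} [IsProbabilityMeasure P] {X : ι → Ω → ℝ} (hX_indep : iIndepFun X P)
    (hX_meas : ∀ i, Measurable (X i)) {m : ι → ℝ} {v : ι → ℝ≥0}
    (hX : ∀ i, P.map (X i) = gaussianReal (m i) (v i)) (s : Finset ι) :
    P.map (∑ i ∈ s, X i) = gaussianReal (∑ i ∈ s, m i) (∑ i ∈ s, v i) := by
  induction s using Finset.cons_induction with
  | empty =>
    change P.map (fun _ => (0 : ℝ)) = _
    simp [gaussianReal_zero_var]
  | cons i s hi ih =>
    rw [sum_cons, sum_cons, sum_cons, add_comm (X i), add_comm (m i), add_comm (v i)]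
    exact gaussianReal_add_gaussianReal_of_indepFun
      (hX_indep.indepFun_finsetSum_of_notMem hX_meas hi) ih (hX i)

lemma map_pi_gaussianReal_sum_mul {ι : Type*} [Fintype ι] (m : ι → ℝ) (v : ι → ℝ≥0)
    (c : ι → ℝ) :
    (Measure.pi fun i => gaussianReal (m i) (v i)).map (fun z => ∑ i, c i * z i)
      = gaussianReal (∑ i, c i * m i) (∑ i, (.mk (c i ^ 2) (sq_nonneg _) : ℝ≥0) * v i) := by
  have hsum : (fun z : ι → ℝ => ∑ i, c i * z i) = ∑ i, fun z => c i * z i := by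
    ext z; simp [Finset.sum_apply]
  rw [hsum]
  refine map_sum_eq_gaussianReal_of_iIndepFun
    (iIndepFun_pi (X := fun i (y : ℝ) => c i * y) fun i => by fun_prop) (fun i => by fun_prop)
    (fun i => ?_) _
  rw [← gaussianReal_map_const_mul,
    ← (measurePreserving_eval (fun i => gaussianReal (m i) (v i)) i).map_eq,
    Measure.map_map (measurable_const_mul (c i)) (measurable_pi_apply i)]
  rfl

lemma gaussianReal_Iio_eq_Ici (m a : ℝ) {v : ℝ≥0} (hv : v ≠ 0) :
    gaussianReal m v (Set.Iio a) = gaussianReal 0 1 (Set.Ici ((m - a) / √v)) := by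
  have hσ : 0 < √(v : ℝ) := Real.sqrt_pos.2 (by positivity)
  have hstd : (gaussianReal m v).map (fun y => (m - y) / √v) = gaussianReal 0 1 := by
    rw [show (fun y => (m - y) / √v) = (· / √v) ∘ (m - ·) from rfl,
      ← Measure.map_map (by fun_prop) (by fun_prop), gaussianReal_map_const_sub,
      gaussianReal_map_div_const, sub_self, zero_div]
    congr 1
    ext
    simp [Real.sq_sqrt, hv]
  rw [← hstd, Measure.map_apply (by fun_prop) measurableSet_Ici,
    measure_congr (Iio_ae_eq_Iic' (gaussianReal_absolutelyContinuous m hv (measure_singleton a)))]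
  congr 1
  ext y
  simp only [Set.mem_Iic, Set.mem_preimage, Set.mem_Ici, div_le_div_iff_of_pos_right hσ]
  constructor <;> intro h <;> linarith

lemma pi_gaussianReal_add_sum_mul_lt_zero {ι : Type*} [Fintype ι] {v : ℝ≥0} (hv : v ≠ 0)
    {c : ι → ℝ} (hc : c ≠ 0) (b : ℝ) :
    (Measure.pi fun _ : ι => gaussianReal 0 v) {z | b + ∑ i, c i * z i < 0}
      = gaussianReal 0 1 (Set.Ici (b / √(∑ i, c i ^ 2 * v))) := by
  set V : ℝ≥0 := ∑ i, (.mk (c i ^ 2) (sq_nonneg _) : ℝ≥0) * v with hV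
  have hV_coe : (V : ℝ) = ∑ i, c i ^ 2 * v := by simp [hV]
  have hV_ne : V ≠ 0 := by
    obtain ⟨i, hi⟩ := Function.ne_iff.1 hc
    have hv_pos : (0 : ℝ) < v := NNReal.coe_pos.2 (pos_iff_ne_zero.2 hv)
    have hci : c i ≠ 0 := hi
    rw [← NNReal.coe_ne_zero, hV_coe]
    exact (sum_pos' (fun j _ => by positivity) ⟨i, mem_univ i, by positivity⟩).ne'
  have hevent : {z : ι → ℝ | b + ∑ i, c i * z i < 0}
      = (fun z => ∑ i, c i * z i) ⁻¹' Set.Iio (-b) := by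
    ext z
    simp only [Set.mem_ofPred_eq, Set.mem_preimage, Set.mem_Iio]
    constructor <;> intro h <;> linarith
  rw [hevent, ← Measure.map_apply (by fun_prop) measurableSet_Iio,
    map_pi_gaussianReal_sum_mul, gaussianReal_Iio_eq_Ici _ _ hV_ne, ← hV_coe]
  simp

lemma sum_metric_difference_eq {ι : Type*} [Fintype ι] (p q z : ι → ℝ) :
    ∑ k, (2 * (p k - q k) * (p k + z k) + q k ^ 2 - p k ^ 2)
      = ∑ k, (p k - q k) ^ 2 + ∑ k, 2 * (p k - q k) * z k := by
  rw [← sum_add_distrib]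
  exact sum_congr rfl fun k _ => by ring

lemma div_sqrt_four_mul_mul {A : ℝ} (hA : 0 ≤ A) (w : ℝ) :
    A / √(4 * A * w) = √A / (2 * √w) := by
  rcases hA.eq_or_lt with rfl | hA
  · simp
  have hsqrt : √(4 * A * w) = √A * (2 * √w) := by
    rw [Real.sqrt_mul (by positivity), Real.sqrt_mul (by norm_num),
      show (4 : ℝ) = 2 ^ 2 by norm_num, Real.sqrt_sq (by norm_num)]
    ring
  rw [hsqrt]
  nth_rewrite 1 [← Real.mul_self_sqrt hA.le]
  exact mul_div_mul_left _ _ (Real.sqrt_pos.2 hA).ne'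

theorem pep_sdec_awgn_general (d : ℝ) (hd : 0 < d) (v : NNReal) (hv : 0 < v)
    (N : ℕ) (x xh : Fin N → Fin 4) (hne : x ≠ xh)
    (s : Fin 4 → ℝ) (hs : ∀ i, s i = (2 * (i : ℝ) - 3) * d) :
    ((Measure.pi fun _ : Fin N => gaussianReal 0 v)
        {z : Fin N → ℝ | ∑ k, (2 * (s (x k) - s (xh k)) * (s (x k) + z k)
            + (s (xh k)) ^ 2 - (s (x k)) ^ 2) < 0}).toReal
      = ((gaussianReal 0 1) (Set.Ici
          ((∑ k, (s (x k) - s (xh k)) ^ 2)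
            / Real.sqrt (∑ k, 4 * (s (x k) - s (xh k)) ^ 2 * (v : ℝ))))).toReal
    ∧ (∑ k, (s (x k) - s (xh k)) ^ 2)
          / Real.sqrt (∑ k, 4 * (s (x k) - s (xh k)) ^ 2 * (v : ℝ))
        = d * Real.sqrt (∑ k, ((x k : ℝ) - (xh k : ℝ)) ^ 2) / Real.sqrt (v : ℝ) := by
  set a : Fin N → ℝ := fun k => s (x k) - s (xh k) with ha_def
  have ha : ∀ k, a k = 2 * d * ((x k : ℝ) - xh k) := fun k => by simp only [ha_def, hs]; ring
  have h2a_ne : (fun k => 2 * a k) ≠ 0 := by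
    obtain ⟨k, hk⟩ := Function.ne_iff.1 hne
    refine Function.ne_iff.2 ⟨k, ?_⟩
    rw [Pi.zero_apply, ha]
    exact mul_ne_zero two_ne_zero <| mul_ne_zero (by positivity) <|
      sub_ne_zero.2 (by exact_mod_cast Fin.val_injective.ne hk)
  have hvar : ∑ k, 4 * a k ^ 2 * (v : ℝ) = 4 * (∑ k, a k ^ 2) * v := by
    rw [mul_sum, sum_mul]
  have hdist : ∑ k, a k ^ 2 = (2 * d) ^ 2 * ∑ k, ((x k : ℝ) - xh k) ^ 2 := by
    rw [mul_sum]
    exact sum_congr rfl fun k _ => by rw [ha]; ring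
  constructor
  · simp_rw [sum_metric_difference_eq]
    have h := pi_gaussianReal_add_sum_mul_lt_zero hv.ne' h2a_ne (∑ k, a k ^ 2)
    simp only [mul_pow, show (2 : ℝ) ^ 2 = 4 by norm_num] at h
    exact congrArg ENNReal.toReal h
  · rw [hvar, div_sqrt_four_mul_mul (sum_nonneg fun k _ => sq_nonneg _), hdist,
      Real.sqrt_mul (by positivity), Real.sqrt_sq (by positivity), mul_assoc,
      mul_div_mul_left _ _ two_ne_zero]

/-- Exact pairwise error probability of the maximum-likelihood
symbol-wise decoder for 4-PAM over the AWGN channel: the probability that the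
symbol metric difference is negative equals the Gaussian tail function `Q`
evaluated at the normalized distance, which equals `d·√(Σ (xₖ−x̂ₖ)²)/√v`. -/
theorem pep_sdec_awgn (d : ℝ) (hd : 0 < d) (v : NNReal) (hv : 0 < v)
    (N : ℕ) (hN : 1 ≤ N) (x xh : Fin N → Fin 4) (hne : x ≠ xh)
    (s : Fin 4 → ℝ) (hs : ∀ i, s i = (2 * (i : ℝ) - 3) * d) :
    ((Measure.pi fun _ : Fin N => gaussianReal 0 v)
        {z : Fin N → ℝ | ∑ k, (2 * (s (x k) - s (xh k)) * (s (x k) + z k)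
            + (s (xh k)) ^ 2 - (s (x k)) ^ 2) < 0}).toReal
      = ((gaussianReal 0 1) (Set.Ici
          ((∑ k, (s (x k) - s (xh k)) ^ 2)
            / Real.sqrt (∑ k, 4 * (s (x k) - s (xh k)) ^ 2 * (v : ℝ))))).toReal
    ∧ (∑ k, (s (x k) - s (xh k)) ^ 2)
          / Real.sqrt (∑ k, 4 * (s (x k) - s (xh k)) ^ 2 * (v : ℝ))
        = d * Real.sqrt (∑ k, ((x k : ℝ) - (xh k : ℝ)) ^ 2) / Real.sqrt (v : ℝ) :=
  pep_sdec_awgn_general d hd v hv N x xh hne s hs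
end

section
/- For all real numbers β and w with β > 0 and w ≥ 0, equality √(β·(β + 8w)) = (2/√3)·(β + 2w) holds if and only if β = 4w. Consequently 2/√3 is the greatest value of the function (β, w) ↦ √(β(β+8w))/(β+2w) over the region β > 0, w ≥ 0, i.e., IsGreatest { r : ℝ | ∃ β w, 0 < β ∧ 0 ≤ w ∧ r = √(β(β+8w))/(β+2w) } (2/√3). -/
/-! The whole statement rests on the identity
`((2/√3)(β + 2w))² - β(β + 8w) = (β - 4w)²/3`: the right side is nonnegative and vanishes
exactly when `β = 4w`, and taking square roots turns this into the inequality and its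
equality case. -/

namespace Real

theorem sq_two_div_sqrt_three_mul_sub (β w : ℝ) :
    (2 / √3 * (β + 2 * w)) ^ 2 - β * (β + 8 * w) = (β - 4 * w) ^ 2 / 3 := by
  rw [mul_pow, div_pow, sq_sqrt zero_le_three]
  ring

theorem sqrt_mul_add_eight_mul_le {β w : ℝ} (h : 0 ≤ β + 2 * w) :
    √(β * (β + 8 * w)) ≤ 2 / √3 * (β + 2 * w) := by
  have hgap := sq_two_div_sqrt_three_mul_sub β w
  refine sqrt_le_iff.mpr ⟨by positivity, ?_⟩
  nlinarith [sq_nonneg (β - 4 * w)]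

theorem sqrt_mul_add_eight_mul_eq_iff {β w : ℝ} (h : 0 < β + 2 * w) :
    √(β * (β + 8 * w)) = 2 / √3 * (β + 2 * w) ↔ β = 4 * w := by
  have hgap := sq_two_div_sqrt_three_mul_sub β w
  rw [sqrt_eq_iff_mul_self_eq_of_pos (by positivity), ← sq, ← sub_eq_zero, hgap,
    div_eq_zero_iff, sq_eq_zero_iff, sub_eq_zero]
  norm_num

end Real

/-- Equality `√(β(β+8w)) = (2/√3)(β+2w)` holds (for `β > 0`,
`w ≥ 0`) iff `β = 4w`; consequently `2/√3` is the greatest value of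
`(β, w) ↦ √(β(β+8w))/(β+2w)` over the region `β > 0`, `w ≥ 0`. -/
theorem loss_ratio_eq_iff_and_isGreatest :
    (∀ β w : ℝ, 0 < β → 0 ≤ w →
      (Real.sqrt (β * (β + 8 * w)) = (2 / Real.sqrt 3) * (β + 2 * w) ↔ β = 4 * w))
    ∧ IsGreatest {r : ℝ | ∃ β w : ℝ, 0 < β ∧ 0 ≤ w ∧
        r = Real.sqrt (β * (β + 8 * w)) / (β + 2 * w)} (2 / Real.sqrt 3) := by
  refine ⟨fun β w hβ hw => Real.sqrt_mul_add_eight_mul_eq_iff (by linarith), ?_, ?_⟩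
  · refine ⟨4, 1, by norm_num, zero_le_one, ?_⟩
    rw [Real.sqrt_mul_add_eight_mul_eq_iff (by norm_num) |>.mpr (by norm_num)]
    norm_num
  · rintro r ⟨β, w, hβ, hw, rfl⟩
    have hpos : 0 < β + 2 * w := by linarith
    rw [div_le_iff₀ hpos]
    exact Real.sqrt_mul_add_eight_mul_le hpos.le
end

section
/- For all real numbers β and w with β > 0 and w ≥ 0, the loss in decibels satisfies 20 · Real.logb 10 ( √(β·(β + 8w)) / (β + 2w) ) ≤ 1.25. (In particular 20·logb 10 (2/√3) ≤ 1.25, equivalently (4/3)^8 ≤ 10.) -/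
/-!
Squaring removes the square root: the squared ratio `β (β + 8w) / (β + 2w)²` is at most `4/3`,
because `4/3 · (β + 2w)² - β (β + 8w) = (β - 4w)² / 3`. Hence the loss is at most
`10 · log₁₀ (4/3)`, and `10 · log₁₀ (4/3) ≤ 1.25` amounts to `(4/3)^8 = 65536/6561 ≤ 10`.
-/

open Real

lemma mul_add_eight_mul_le_four_thirds_mul_sq (β w : ℝ) :
    β * (β + 8 * w) ≤ 4 / 3 * (β + 2 * w) ^ 2 := by
  nlinarith [sq_nonneg (β - 4 * w)]

lemma sq_sqrt_div_le {a c d : ℝ} (hc : 0 ≤ c) (h : a ≤ c * d ^ 2) : (√a / d) ^ 2 ≤ c := by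
  rw [div_pow]
  refine div_le_of_le_mul₀ (sq_nonneg d) hc ?_
  calc √a ^ 2 ≤ √(c * d ^ 2) ^ 2 := pow_le_pow_left₀ (sqrt_nonneg a) (sqrt_le_sqrt h) 2
    _ = c * d ^ 2 := sq_sqrt (by positivity)

lemma two_mul_logb_le_of_sq_le {b c x : ℝ} (hb : 1 < b) (hc : 1 ≤ c) (h : x ^ 2 ≤ c) :
    2 * logb b x ≤ logb b c := by
  rcases eq_or_ne x 0 with rfl | hx
  · simpa using logb_nonneg hb hc
  · have hlog := logb_le_logb_of_le hb ((sq_pos_of_ne_zero hx)) h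
    rwa [logb_pow, Nat.cast_ofNat] at hlog

lemma logb_ten_four_thirds_le : logb 10 (4 / 3) ≤ 1 / 8 := by
  have h : logb 10 ((4 / 3) ^ 8) ≤ logb 10 10 :=
    logb_le_logb_of_le (by norm_num) (by norm_num) (by norm_num)
  rw [logb_pow, logb_self_eq_one (by norm_num)] at h
  linarith

theorem loss_dB_le_general (β w : ℝ) :
    20 * Real.logb 10 (Real.sqrt (β * (β + 8 * w)) / (β + 2 * w)) ≤ 1.25 := by
  have hsq : (√(β * (β + 8 * w)) / (β + 2 * w)) ^ 2 ≤ 4 / 3 :=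
    sq_sqrt_div_le (by norm_num) (mul_add_eight_mul_le_four_thirds_mul_sq β w)
  have hlog := two_mul_logb_le_of_sq_le (b := 10) (by norm_num) (by norm_num) hsq
  linarith [logb_ten_four_thirds_le]

/-- The asymptotic pairwise loss in decibels of the bit-wise
decoder relative to the symbol-wise decoder is at most 1.25 dB:
for `β > 0` and `w ≥ 0`, `20·log₁₀(√(β(β+8w))/(β+2w)) ≤ 1.25`. -/
theorem loss_dB_le (β w : ℝ) (hβ : 0 < β) (hw : 0 ≤ w) :
    20 * Real.logb 10 (Real.sqrt (β * (β + 8 * w)) / (β + 2 * w)) ≤ 1.25 :=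
  loss_dB_le_general β w
end

section
/- (Theorem 1.) Let N ≥ 1 and let x, x̂ : Fin N → Fin 4 be two distinct 4-PAM symbol sequences. Then a^X(x, x̂) ≤ (2/√3) · a^B(x, x̂); equivalently, the asymptotic pairwise loss L(x, x̂) = 20 · Real.logb 10 ( a^X(x, x̂) / a^B(x, x̂) ) satisfies L(x, x̂) ≤ 1.25 dB. -/
open Finset

noncomputable section

/-- Pairwise weight of a pair of 4-PAM symbols: `1` if `|i−j| ∈ {1,3}`,
`4` if `|i−j| = 2`, `0` if `i = j`. -/
def pw (i j : Fin 4) : ℝ :=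
  if i = j then 0 else if ((i : ℤ) - (j : ℤ)).natAbs = 2 then 4 else 1

/-- Corner count: number of positions where the symbol pair is `(s₁,s₄)` or `(s₄,s₁)`. -/
def wc {N : ℕ} (x xh : Fin N → Fin 4) : ℕ :=
  (Finset.univ.filter fun k =>
    (x k, xh k) = ((0 : Fin 4), (3 : Fin 4)) ∨ (x k, xh k) = ((3 : Fin 4), (0 : Fin 4))).card

/-- Weighted error count `β(x, x̂)`. -/
def betaW {N : ℕ} (x xh : Fin N → Fin 4) : ℝ := ∑ k, pw (x k) (xh k)

/-- Normalized distance of the symbol-wise decoder: `a^X = √(β + 8 w_c)`. -/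
def aX {N : ℕ} (x xh : Fin N → Fin 4) : ℝ :=
  Real.sqrt (betaW x xh + 8 * wc x xh)

/-- Normalized distance of the bit-wise decoder: `a^B = (β + 2 w_c)/√β`. -/
def aB {N : ℕ} (x xh : Fin N → Fin 4) : ℝ :=
  (betaW x xh + 2 * wc x xh) / Real.sqrt (betaW x xh)

end

/-! Squaring, `√(β + 8w) ≤ (2/√3)·(β + 2w)/√β` becomes `3β(β + 8w) ≤ 4(β + 2w)²`, and the
difference of the two sides is `(β - 4w)²`. The decibel bound then follows from
`(2/√3)^16 = 65536/6561 ≤ 10`. -/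

open Real

lemma sqrt_add_eight_mul_le {β w : ℝ} (hβ : 0 < β) (hw : 0 ≤ w) :
    √(β + 8 * w) ≤ 2 / √3 * ((β + 2 * w) / √β) := by
  have h3 : √3 ^ 2 = 3 := sq_sqrt (by norm_num)
  have hβ' : √β ^ 2 = β := sq_sqrt hβ.le
  have hsq : (2 / √3 * ((β + 2 * w) / √β)) ^ 2 = 4 * (β + 2 * w) ^ 2 / (3 * β) := by
    rw [mul_pow, div_pow, div_pow, h3, hβ']
    ring
  rw [sqrt_le_left (by positivity), hsq, le_div_iff₀ (by positivity)]
  nlinarith [sq_nonneg (β - 4 * w)]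

lemma two_div_sqrt_three_pow_sixteen_le_ten : (2 / √3) ^ 16 ≤ 10 := by
  rw [div_pow, show √3 ^ 16 = (√3 ^ 2) ^ 8 by ring, sq_sqrt (by norm_num)]
  norm_num

lemma twenty_mul_logb_ten_le_of_pow_sixteen_le {t : ℝ} (ht : 0 < t) (h : t ^ 16 ≤ 10) :
    20 * logb 10 t ≤ 1.25 := by
  have h16 : logb 10 (t ^ 16) ≤ 1 :=
    (logb_le_logb_of_le (by norm_num) (by positivity) h).trans_eq (logb_self_eq_one (by norm_num))
  rw [logb_pow] at h16
  push_cast at h16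
  linarith

lemma pw_nonneg (i j : Fin 4) : 0 ≤ pw i j := by
  unfold pw
  split_ifs <;> norm_num

lemma pw_pos_of_ne {i j : Fin 4} (h : i ≠ j) : 0 < pw i j := by
  unfold pw
  split_ifs <;> norm_num
  exact h ‹_›

lemma betaW_pos {N : ℕ} {x xh : Fin N → Fin 4} (hne : x ≠ xh) : 0 < betaW x xh := by
  obtain ⟨k, hk⟩ := Function.ne_iff.mp hne
  exact sum_pos' (fun i _ => pw_nonneg _ _) ⟨k, mem_univ k, pw_pos_of_ne hk⟩

lemma aX_pos {N : ℕ} {x xh : Fin N → Fin 4} (hne : x ≠ xh) : 0 < aX x xh :=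
  sqrt_pos.mpr (by have := betaW_pos hne; positivity)

lemma aB_pos {N : ℕ} {x xh : Fin N → Fin 4} (hne : x ≠ xh) : 0 < aB x xh := by
  have := betaW_pos hne
  unfold aB
  positivity

lemma aX_le_two_div_sqrt_three_mul_aB {N : ℕ} {x xh : Fin N → Fin 4} (hne : x ≠ xh) :
    aX x xh ≤ 2 / √3 * aB x xh :=
  sqrt_add_eight_mul_le (betaW_pos hne) (Nat.cast_nonneg _)

theorem asymptotic_pairwise_loss_le_general (N : ℕ)
    (x xh : Fin N → Fin 4) (hne : x ≠ xh) :
    aX x xh ≤ (2 / Real.sqrt 3) * aB x xh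
    ∧ 20 * Real.logb 10 (aX x xh / aB x xh) ≤ 1.25 := by
  have hle := aX_le_two_div_sqrt_three_mul_aB hne
  have hratio_pos : 0 < aX x xh / aB x xh := div_pos (aX_pos hne) (aB_pos hne)
  have hratio : aX x xh / aB x xh ≤ 2 / √3 := by
    rwa [div_le_iff₀ (aB_pos hne)]
  refine ⟨hle, twenty_mul_logb_ten_le_of_pow_sixteen_le hratio_pos ?_⟩
  calc (aX x xh / aB x xh) ^ 16 ≤ (2 / √3) ^ 16 := by gcongr
    _ ≤ 10 := two_div_sqrt_three_pow_sixteen_le_ten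

/-- **Theorem 1.** For any two distinct 4-PAM symbol sequences,
`a^X(x,x̂) ≤ (2/√3)·a^B(x,x̂)`; equivalently, the asymptotic pairwise loss
`L(x,x̂) = 20·log₁₀(a^X/a^B)` is at most 1.25 dB. -/
theorem asymptotic_pairwise_loss_le (N : ℕ) (hN : 1 ≤ N)
    (x xh : Fin N → Fin 4) (hne : x ≠ xh) :
    aX x xh ≤ (2 / Real.sqrt 3) * aB x xh
    ∧ 20 * Real.logb 10 (aX x xh / aB x xh) ≤ 1.25 :=
  asymptotic_pairwise_loss_le_general N x xh hne
end

section
/- For N = 4, the symbol sequences x = ![0, 3, 2, 1] and x̂ = ![3, 2, 1, 0] (as functions Fin 4 → Fin 4, representing [s₁,s₄,s₃,s₂] and [s₄,s₃,s₂,s₁]) satisfy β(x,x̂) = 4, w_c(x,x̂) = 1, and hence a^X(x,x̂) = (2/√3) · a^B(x,x̂); i.e., this pair of codewords attains the maximal asymptotic pairwise loss 20·log₁₀(2/√3) ≈ 1.25 dB. -/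
open Finset

/-! Once `β = 4 w_c`, both distances are multiples of `√w_c`: `a^X = √(12 w_c) = 2√3 · √w_c` and
`a^B = 6 w_c / √(4 w_c) = 3 √w_c`, so their ratio is `2/√3`. The given pair makes four errors of
weight `1`: one corner error `(s₁,s₄)` and three between adjacent symbols, hence `β = 4 = 4 w_c`. -/

open Real

theorem aX_eq_two_div_sqrt_three_mul_aB_of_betaW_eq_four_mul_wc {N : ℕ} {x xh : Fin N → Fin 4}
    (h : betaW x xh = 4 * wc x xh) : aX x xh = 2 / √3 * aB x xh := by
  set w : ℝ := (wc x xh : ℝ)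
  have hw : 0 ≤ w := Nat.cast_nonneg _
  have hX : aX x xh = 2 * √3 * √w := by
    rw [aX, h, show 4 * w + 8 * w = 2 ^ 2 * 3 * w by ring, sqrt_mul' _ hw, sqrt_mul' _ (by norm_num),
      sqrt_sq (by norm_num)]
  have hB : aB x xh = 3 * √w := by
    rw [aB, h, sqrt_mul' _ hw, show (4 : ℝ) = 2 ^ 2 by norm_num, sqrt_sq (by norm_num)]
    conv_rhs => rw [← div_sqrt]
    ring
  rw [hX, hB]
  field_simp
  rw [sq_sqrt (by norm_num)]
  ring

/-- The pair of codewords `x = [s₁,s₄,s₃,s₂]`,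
`x̂ = [s₄,s₃,s₂,s₁]` has `β = 4`, `w_c = 1` and attains the maximal
asymptotic pairwise loss: `a^X = (2/√3)·a^B`. -/
theorem maximal_loss_pair :
    betaW ![(0 : Fin 4), 3, 2, 1] ![(3 : Fin 4), 2, 1, 0] = 4
    ∧ wc ![(0 : Fin 4), 3, 2, 1] ![(3 : Fin 4), 2, 1, 0] = 1
    ∧ aX ![(0 : Fin 4), 3, 2, 1] ![(3 : Fin 4), 2, 1, 0]
        = (2 / Real.sqrt 3) * aB ![(0 : Fin 4), 3, 2, 1] ![(3 : Fin 4), 2, 1, 0] := by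
  have hβ : betaW ![(0 : Fin 4), 3, 2, 1] ![(3 : Fin 4), 2, 1, 0] = 4 := by
    simp [betaW, Fin.sum_univ_four, pw, Fin.ext_iff]
    norm_num
  have hw : wc ![(0 : Fin 4), 3, 2, 1] ![(3 : Fin 4), 2, 1, 0] = 1 := by decide
  exact ⟨hβ, hw, aX_eq_two_div_sqrt_three_mul_aB_of_betaW_eq_four_mul_wc (by rw [hβ, hw]; norm_num)⟩
end

section
/- (Theorem 2.) Let N ≥ 1, let L be either the Gray labeling GC3 or GC4, and let B be a ZMod 2-submodule of (Fin N → ZMod 2 × ZMod 2) containing at least two elements. For b ∈ B write x_b = L⁻¹ ∘ b : Fin N → Fin 4. Then the minimum of a^X(x_b, x_b̂) over all pairs b ≠ b̂ in B equals the minimum of a^B(x_b, x_b̂) over all pairs b ≠ b̂ in B; i.e., the asymptotic loss L(B) of the bit-wise decoder is zero. -/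
open Finset

noncomputable section

/-- The Gray labeling GC1 (binary reflected Gray code) for 4-PAM. -/
def GC1 : Fin 4 ≃ (ZMod 2 × ZMod 2) where
  toFun := ![(0, 0), (0, 1), (1, 1), (1, 0)]
  invFun := fun p => if p = (0, 0) then 0 else if p = (0, 1) then 1
    else if p = (1, 1) then 2 else 3
  left_inv := by decide
  right_inv := by decide

/-- The Gray labeling GC2 for 4-PAM. -/
def GC2 : Fin 4 ≃ (ZMod 2 × ZMod 2) where
  toFun := ![(0, 0), (1, 0), (1, 1), (0, 1)]
  invFun := fun p => if p = (0, 0) then 0 else if p = (1, 0) then 1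
    else if p = (1, 1) then 2 else 3
  left_inv := by decide
  right_inv := by decide

/-- The Gray labeling GC3 for 4-PAM. -/
def GC3 : Fin 4 ≃ (ZMod 2 × ZMod 2) where
  toFun := ![(0, 1), (0, 0), (1, 0), (1, 1)]
  invFun := fun p => if p = (0, 1) then 0 else if p = (0, 0) then 1
    else if p = (1, 0) then 2 else 3
  left_inv := by decide
  right_inv := by decide

/-- The Gray labeling GC4 for 4-PAM. -/
def GC4 : Fin 4 ≃ (ZMod 2 × ZMod 2) where
  toFun := ![(1, 0), (0, 0), (0, 1), (1, 1)]
  invFun := fun p => if p = (1, 0) then 0 else if p = (0, 0) then 1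
    else if p = (0, 1) then 2 else 3
  left_inv := by decide
  right_inv := by decide

/-- Symbol sequence corresponding to a binary codeword under labeling `L`. -/
def xb {N : ℕ} (L : Fin 4 ≃ (ZMod 2 × ZMod 2)) (b : Fin N → ZMod 2 × ZMod 2) :
    Fin N → Fin 4 := fun k => L.symm (b k)

end


/-!
Under GC3 and GC4 the pairwise weight of two symbols depends only on the difference of their
labels, so `β(x_b, x_b̂)` is a weight of the codeword `b - b̂`. Since `w_c ≥ 0`, both `a^X` and
`a^B` are at least `√β`, and for the pair `(d, 0)` equality holds: `0` labels the inner symbol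
`1`, so no position is a corner. As `B` is closed under subtraction, both minima therefore equal
the minimum of `√β` over the nonzero codewords.
-/

theorem sInf_pairs_eq_sInf_nonzero {R M : Type*} [Ring R] [AddCommGroup M] [Module R M]
    (B : Submodule R M) (f : M → M → ℝ) (g : M → ℝ)
    (hle : ∀ b bh, g (b - bh) ≤ f b bh) (heq : ∀ d, f d 0 = g d) :
    sInf {r : ℝ | ∃ b ∈ B, ∃ bh ∈ B, b ≠ bh ∧ r = f b bh}
      = sInf {r : ℝ | ∃ d ∈ B, d ≠ 0 ∧ r = g d} := by
  apply csInf_eq_csInf_of_forall_exists_le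
  · rintro _ ⟨b, hb, bh, hbh, hne, rfl⟩
    exact ⟨_, ⟨b - bh, B.sub_mem hb hbh, sub_ne_zero_of_ne hne, rfl⟩, hle b bh⟩
  · rintro _ ⟨d, hd, hd0, rfl⟩
    exact ⟨_, ⟨d, hd, 0, B.zero_mem, hd0, (heq d).symm⟩, le_rfl⟩

section Distances

variable {N : ℕ} (x xh : Fin N → Fin 4)

theorem sqrt_betaW_le_aX : √(betaW x xh) ≤ aX x xh :=
  Real.sqrt_le_sqrt (le_add_of_nonneg_right (by positivity))

theorem sqrt_betaW_le_aB : √(betaW x xh) ≤ aB x xh :=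
  calc √(betaW x xh) = betaW x xh / √(betaW x xh) := Real.div_sqrt.symm
    _ ≤ aB x xh :=
      div_le_div_of_nonneg_right (le_add_of_nonneg_right (by positivity)) (Real.sqrt_nonneg _)

variable {x xh}

theorem wc_eq_zero_of_forall_ne (h : ∀ k, xh k ≠ 0 ∧ xh k ≠ 3) : wc x xh = 0 := by
  refine Finset.card_eq_zero.mpr (Finset.filter_eq_empty_iff.mpr fun k _ => ?_)
  obtain ⟨h0, h3⟩ := h k
  simp only [Prod.ext_iff]
  tauto

theorem aX_eq_sqrt_betaW (h : wc x xh = 0) : aX x xh = √(betaW x xh) := by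
  simp [aX, h]

theorem aB_eq_sqrt_betaW (h : wc x xh = 0) : aB x xh = √(betaW x xh) := by
  simp [aB, h, Real.div_sqrt]

end Distances

/-- Pairwise weight of two symbols in terms of the difference of their GC3 or GC4 labels. -/
def diffWeight (d : ZMod 2 × ZMod 2) : ℝ := if d = 0 then 0 else if d = (1, 1) then 4 else 1

def betaDiff {N : ℕ} (d : Fin N → ZMod 2 × ZMod 2) : ℝ := ∑ k, diffWeight (d k)

theorem pw_eq_diffWeight_GC3 (i j : Fin 4) : pw i j = diffWeight (GC3 i - GC3 j) := by
  fin_cases i <;> fin_cases j <;> simp +decide [pw, diffWeight]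

theorem pw_eq_diffWeight_GC4 (i j : Fin 4) : pw i j = diffWeight (GC4 i - GC4 j) := by
  fin_cases i <;> fin_cases j <;> simp +decide [pw, diffWeight]

section GrayLabeling

variable {L : Fin 4 ≃ (ZMod 2 × ZMod 2)}

theorem pw_symm_eq_diffWeight (hL : L = GC3 ∨ L = GC4) (u v : ZMod 2 × ZMod 2) :
    pw (L.symm u) (L.symm v) = diffWeight (u - v) := by
  rcases hL with rfl | rfl
  · rw [pw_eq_diffWeight_GC3, Equiv.apply_symm_apply, Equiv.apply_symm_apply]
  · rw [pw_eq_diffWeight_GC4, Equiv.apply_symm_apply, Equiv.apply_symm_apply]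

theorem betaW_xb (hL : L = GC3 ∨ L = GC4) {N : ℕ} (b bh : Fin N → ZMod 2 × ZMod 2) :
    betaW (xb L b) (xb L bh) = betaDiff (b - bh) :=
  Finset.sum_congr rfl fun k _ => pw_symm_eq_diffWeight hL (b k) (bh k)

theorem wc_xb_zero (hL : L = GC3 ∨ L = GC4) {N : ℕ} (b : Fin N → ZMod 2 × ZMod 2) :
    wc (xb L b) (xb L 0) = 0 := by
  have h : L.symm 0 = 1 := by rcases hL with rfl | rfl <;> decide
  exact wc_eq_zero_of_forall_ne fun k => by simp [xb, h]

end GrayLabeling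

theorem loss_zero_GC3_GC4_general (N : ℕ)
    (L : Fin 4 ≃ (ZMod 2 × ZMod 2)) (hL : L = GC3 ∨ L = GC4)
    (B : Submodule (ZMod 2) (Fin N → ZMod 2 × ZMod 2)) :
    sInf {r : ℝ | ∃ b ∈ B, ∃ bh ∈ B, b ≠ bh ∧ r = aX (xb L b) (xb L bh)}
      = sInf {r : ℝ | ∃ b ∈ B, ∃ bh ∈ B, b ≠ bh ∧ r = aB (xb L b) (xb L bh)} := by
  have hX := sInf_pairs_eq_sInf_nonzero B (fun b bh => aX (xb L b) (xb L bh))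
    (fun d => √(betaDiff d)) (fun b bh => betaW_xb hL b bh ▸ sqrt_betaW_le_aX _ _)
    (fun d => by rw [aX_eq_sqrt_betaW (wc_xb_zero hL d), betaW_xb hL, sub_zero])
  have hB := sInf_pairs_eq_sInf_nonzero B (fun b bh => aB (xb L b) (xb L bh))
    (fun d => √(betaDiff d)) (fun b bh => betaW_xb hL b bh ▸ sqrt_betaW_le_aB _ _)
    (fun d => by rw [aB_eq_sqrt_betaW (wc_xb_zero hL d), betaW_xb hL, sub_zero])
  exact hX.trans hB.symm

/-- **Theorem 2.** For 4-PAM with the Gray labeling GC3 or GC4 and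
any binary linear code `B` (with at least two codewords), the minimum normalized
distance of the symbol-wise decoder over all pairs of distinct codewords equals
that of the bit-wise decoder: the asymptotic loss `L(B)` is zero. -/
theorem loss_zero_GC3_GC4 (N : ℕ) (hN : 1 ≤ N)
    (L : Fin 4 ≃ (ZMod 2 × ZMod 2)) (hL : L = GC3 ∨ L = GC4)
    (B : Submodule (ZMod 2) (Fin N → ZMod 2 × ZMod 2))
    (hB : (B : Set (Fin N → ZMod 2 × ZMod 2)).Nontrivial) :
    sInf {r : ℝ | ∃ b ∈ B, ∃ bh ∈ B, b ≠ bh ∧ r = aX (xb L b) (xb L bh)}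
      = sInf {r : ℝ | ∃ b ∈ B, ∃ bh ∈ B, b ≠ bh ∧ r = aB (xb L b) (xb L bh)} :=
  loss_zero_GC3_GC4_general N L hL B
end

section
/- (Corollary 1, second part: the 1.25 dB bound is attained by a linear code.) There exist N ≥ 1 and a ZMod 2-submodule B of (Fin N → ZMod 2 × ZMod 2) with exactly two elements such that, under the labeling GC1, the (unique) pair of distinct codewords b ≠ b̂ in B satisfies a^X(x_b, x_b̂) = (2/√3) · a^B(x_b, x_b̂); hence the asymptotic loss L(B) equals 20·log₁₀(2/√3) ≈ 1.25 dB. (One such code has N = 4 and is spanned by the codeword b with b = [(1,0),(0,1),(0,1),(0,1)], for which β = 4 and w_c = 1.) -/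
open Finset

theorem pw_comm (i j : Fin 4) : pw i j = pw j i := by
  rw [pw, pw, ← neg_sub (i : ℤ), Int.natAbs_neg]
  simp only [eq_comm]

theorem betaW_comm {N : ℕ} (x xh : Fin N → Fin 4) : betaW x xh = betaW xh x := by
  simp only [betaW, pw_comm]

theorem wc_comm {N : ℕ} (x xh : Fin N → Fin 4) : wc x xh = wc xh x := by
  unfold wc
  congr 1
  ext k
  simp only [mem_filter, Prod.mk.injEq]
  tauto

theorem aX_comm {N : ℕ} (x xh : Fin N → Fin 4) : aX x xh = aX xh x := by
  rw [aX, aX, betaW_comm, wc_comm]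

theorem aB_comm {N : ℕ} (x xh : Fin N → Fin 4) : aB x xh = aB xh x := by
  rw [aB, aB, betaW_comm, wc_comm]

/-- `β = 4 w_c` is where `a^X / a^B = √(β (β + 8 w_c)) / (β + 2 w_c)` attains its maximum
`2/√3` as a function of `w_c / β`. -/
theorem aX_eq_two_div_sqrt_three_mul_aB {N : ℕ} {x xh : Fin N → Fin 4}
    (hβ : betaW x xh = 4 * wc x xh) (hw : wc x xh ≠ 0) :
    aX x xh = (2 / Real.sqrt 3) * aB x xh := by
  set w : ℝ := (wc x xh : ℝ)
  have hw_pos : 0 < w := Nat.cast_pos.2 (Nat.pos_of_ne_zero hw)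
  have hX : aX x xh = 2 * Real.sqrt 3 * Real.sqrt w := by
    rw [aX, hβ, show 4 * w + 8 * w = 2 ^ 2 * 3 * w by ring, Real.sqrt_mul (by positivity),
      Real.sqrt_mul (by positivity), Real.sqrt_sq zero_le_two]
  have hB : aB x xh = 3 * Real.sqrt w := by
    rw [aB, hβ, show 4 * w = 2 ^ 2 * w by ring, Real.sqrt_mul (by positivity),
      Real.sqrt_sq zero_le_two]
    field_simp
    rw [Real.sq_sqrt hw_pos.le]
    ring
  rw [hX, hB]
  field_simp
  exact Real.sq_sqrt zero_le_three

theorem card_span_singleton_zmod_two {M : Type*} [AddCommGroup M] [Module (ZMod 2) M]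
    {v : M} (hv : v ≠ 0) : Nat.card (Submodule.span (ZMod 2) {v}) = 2 :=
  (Nat.card_congr (LinearEquiv.toSpanNonzeroSingleton (ZMod 2) M v hv).toEquiv).symm.trans
    (Nat.card_zmod 2)

theorem mem_span_singleton_zmod_two {M : Type*} [AddCommGroup M] [Module (ZMod 2) M]
    {v x : M} : x ∈ Submodule.span (ZMod 2) {v} ↔ x = 0 ∨ x = v := by
  rw [Submodule.mem_span_singleton]
  constructor
  · rintro ⟨a, rfl⟩
    fin_cases a
    exacts [Or.inl (zero_smul _ v), Or.inr (one_smul _ v)]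
  · rintro (rfl | rfl)
    exacts [⟨0, zero_smul _ _⟩, ⟨1, one_smul _ _⟩]

/-- Under GC1 this codeword is the symbol sequence `(3, 1, 1, 1)`, at distance `β = 4`,
`w_c = 1` from the all-zero sequence. -/
def cornerCodeword : Fin 4 → ZMod 2 × ZMod 2 := ![(1, 0), (0, 1), (0, 1), (0, 1)]

theorem cornerCodeword_ne_zero : cornerCodeword ≠ 0 := by
  decide

theorem xb_GC1_zero {N : ℕ} : xb GC1 (0 : Fin N → ZMod 2 × ZMod 2) = fun _ => 0 :=
  rfl

theorem xb_GC1_cornerCodeword : xb GC1 cornerCodeword = ![3, 1, 1, 1] := by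
  funext k
  fin_cases k <;> rfl

theorem wc_zero_cornerCodeword : wc (xb GC1 0) (xb GC1 cornerCodeword) = 1 := by
  rw [xb_GC1_zero, xb_GC1_cornerCodeword]
  decide

theorem betaW_zero_cornerCodeword : betaW (xb GC1 0) (xb GC1 cornerCodeword) = 4 := by
  rw [xb_GC1_zero, xb_GC1_cornerCodeword]
  simp [betaW, pw, Fin.sum_univ_four]
  norm_num

theorem aX_zero_cornerCodeword :
    aX (xb GC1 0) (xb GC1 cornerCodeword) =
      (2 / Real.sqrt 3) * aB (xb GC1 0) (xb GC1 cornerCodeword) :=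
  aX_eq_two_div_sqrt_three_mul_aB
    (by rw [betaW_zero_cornerCodeword, wc_zero_cornerCodeword]; norm_num)
    (by rw [wc_zero_cornerCodeword]; exact one_ne_zero)

/-- **Corollary 1, second part.** There is a binary linear code
with exactly two codewords attaining the maximal asymptotic loss under GC1:
its unique pair of distinct codewords satisfies `a^X = (2/√3)·a^B`. -/
theorem loss_bound_attained_by_code :
    ∃ (N : ℕ) (_ : 1 ≤ N) (B : Submodule (ZMod 2) (Fin N → ZMod 2 × ZMod 2)),
      Nat.card B = 2
      ∧ ∀ b ∈ B, ∀ bh ∈ B, b ≠ bh →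
          aX (xb GC1 b) (xb GC1 bh) = (2 / Real.sqrt 3) * aB (xb GC1 b) (xb GC1 bh) := by
  refine ⟨4, by norm_num, Submodule.span (ZMod 2) {cornerCodeword},
    card_span_singleton_zmod_two cornerCodeword_ne_zero, ?_⟩
  intro b hb bh hbh hne
  rcases mem_span_singleton_zmod_two.1 hb with rfl | rfl <;>
    rcases mem_span_singleton_zmod_two.1 hbh with rfl | rfl
  · exact absurd rfl hne
  · exact aX_zero_cornerCodeword
  · rw [aX_comm, aB_comm]
    exact aX_zero_cornerCodeword
  · exact absurd rfl hne
end

section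
/- (Theorem 5, flat fading.) Let N ≥ 1, let x, x̂ : Fin N → Fin 4 be symbol sequences, and let h : Fin N → ℝ be any channel realization. Define α_h = Σ_{k : (x k, x̂ k) ∈ {(0,3),(3,0)}} (h k)² and β_h = Σ_k (h k)² · b(x k, x̂ k). If β_h > 0, then √(β_h · (β_h + 8·α_h)) ≤ (2/√3) · (β_h + 2·α_h); equivalently, the per-realization asymptotic loss 20 · Real.logb 10 ( √(β_h(β_h+8α_h)) / (β_h+2α_h) ) is at most 1.25 dB. -/
/-! The loss inequality is pure algebra: `4 (β + 2α)² - 3 β (β + 8α) = (β - 4α)² ≥ 0`, so the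
ratio `√(β (β + 8α)) / (β + 2α)` never exceeds `2/√3`, whose `20 log₁₀` is below `1.25` because
`(2/√3)¹⁶ = (4/3)⁸ < 10`. -/

open Finset

theorem three_mul_mul_add_le_four_mul_sq (α β : ℝ) :
    3 * (β * (β + 8 * α)) ≤ 4 * (β + 2 * α) ^ 2 := by
  nlinarith [sq_nonneg (β - 4 * α)]

theorem sq_two_div_sqrt_three : (2 / Real.sqrt 3) ^ 2 = 4 / 3 := by
  rw [div_pow, Real.sq_sqrt (by norm_num)]
  norm_num

theorem sqrt_mul_add_le_two_div_sqrt_three_mul {α β : ℝ} (h : 0 ≤ β + 2 * α) :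
    Real.sqrt (β * (β + 8 * α)) ≤ (2 / Real.sqrt 3) * (β + 2 * α) := by
  rw [Real.sqrt_le_iff, mul_pow, sq_two_div_sqrt_three]
  exact ⟨by positivity, by linarith [three_mul_mul_add_le_four_mul_sq α β]⟩

theorem logb_ten_two_div_sqrt_three_le : Real.logb 10 (2 / Real.sqrt 3) ≤ 1 / 16 := by
  have hpow : (2 / Real.sqrt 3) ^ 16 ≤ 10 := by
    rw [show 16 = 2 * 8 from rfl, pow_mul, sq_two_div_sqrt_three]
    norm_num
  have h := Real.logb_le_logb_of_le (b := 10) (by norm_num) (by positivity) hpow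
  rw [Real.logb_pow, Real.logb_self_eq_one (by norm_num)] at h
  push_cast at h
  linarith

theorem twenty_mul_logb_ten_le_of_le_two_div_sqrt_three {r : ℝ} (hr : 0 < r)
    (hle : r ≤ 2 / Real.sqrt 3) : 20 * Real.logb 10 r ≤ 1.25 := by
  have := Real.logb_le_logb_of_le (b := 10) (by norm_num) hr hle
  linarith [logb_ten_two_div_sqrt_three_le]

theorem loss_fading_le_general (N : ℕ) (x xh : Fin N → Fin 4)
    (h : Fin N → ℝ)
    (α : ℝ)
    (hα : α = ∑ k ∈ Finset.univ.filter (fun k =>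
      (x k, xh k) = ((0 : Fin 4), (3 : Fin 4))
        ∨ (x k, xh k) = ((3 : Fin 4), (0 : Fin 4))), (h k) ^ 2)
    (β : ℝ) (hβpos : 0 < β) :
    Real.sqrt (β * (β + 8 * α)) ≤ (2 / Real.sqrt 3) * (β + 2 * α)
    ∧ 20 * Real.logb 10 (Real.sqrt (β * (β + 8 * α)) / (β + 2 * α)) ≤ 1.25 := by
  have hα0 : 0 ≤ α := hα ▸ Finset.sum_nonneg fun k _ => sq_nonneg (h k)
  have hden : 0 < β + 2 * α := by linarith
  have hbound := sqrt_mul_add_le_two_div_sqrt_three_mul hden.le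
  refine ⟨hbound, twenty_mul_logb_ten_le_of_le_two_div_sqrt_three ?_ ?_⟩
  · exact div_pos (Real.sqrt_pos.mpr (by positivity)) hden
  · rwa [div_le_iff₀ hden]

/-- **Theorem 5, flat fading.** For any channel realization `h`,
the per-realization asymptotic loss of the bit-wise decoder is at most 1.25 dB:
with `α_h` the channel-weighted corner count and `β_h` the channel-weighted
error count, `√(β_h(β_h+8α_h)) ≤ (2/√3)(β_h+2α_h)` whenever `β_h > 0`. -/
theorem loss_fading_le (N : ℕ) (hN : 1 ≤ N) (x xh : Fin N → Fin 4)
    (h : Fin N → ℝ)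
    (α : ℝ)
    (hα : α = ∑ k ∈ Finset.univ.filter (fun k =>
      (x k, xh k) = ((0 : Fin 4), (3 : Fin 4))
        ∨ (x k, xh k) = ((3 : Fin 4), (0 : Fin 4))), (h k) ^ 2)
    (β : ℝ) (hβ : β = ∑ k, (h k) ^ 2 * pw (x k) (xh k)) (hβpos : 0 < β) :
    Real.sqrt (β * (β + 8 * α)) ≤ (2 / Real.sqrt 3) * (β + 2 * α)
    ∧ 20 * Real.logb 10 (Real.sqrt (β * (β + 8 * α)) / (β + 2 * α)) ≤ 1.25 :=
  loss_fading_le_general N x xh h α hα β hβpos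
end

section
/- (Corollary: average pairwise loss over fading is at most 1.25 dB.) Let N ≥ 1, let x ≠ x̂ : Fin N → Fin 4, and let ν be a probability measure on (Fin N → ℝ) (the law of the fading coefficients H) such that for ν-almost every h one has β_h > 0, where α_h = Σ_{k : (x k, x̂ k) ∈ {(0,3),(3,0)}} (h k)² and β_h = Σ_k (h k)² · b(x k, x̂ k). Then for every t > 0: ∫ Q( t · (β_h + 2α_h)/√β_h ) dν(h) ≤ ∫ Q( t · (√3/2) · √(β_h + 8α_h) ) dν(h); i.e., the average pairwise error probability of the bit-wise decoder at SNR parameter t is at most that of the symbol-wise decoder at SNR parameter reduced by the factor √3/2 (a 1.25 dB penalty). -/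
/-! The symbol-wise distance `√(β + 8α)` and the bit-wise distance `(β + 2α)/√β` compare,
uniformly in the channel, through the square
`(β + 2α)² - (3/4) β (β + 8α) = (β - 4α)² / 4 ≥ 0`.
So every realization-wise argument of `Q` on the bit-wise side dominates the symbol-wise one
scaled by `√3/2`, and since `Q` is antitone and bounded the comparison survives averaging. -/

open Finset

noncomputable section

open MeasureTheory ProbabilityTheory

/-- The standard Gaussian tail function `Q`. -/
def Q (u : ℝ) : ℝ := ((gaussianReal 0 1) (Set.Ici u)).toReal

lemma Q_antitone : Antitone Q := fun _ _ huv =>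
  ENNReal.toReal_mono (measure_ne_top _ _) (measure_mono (Set.Ici_subset_Ici.mpr huv))

lemma Q_nonneg (u : ℝ) : 0 ≤ Q u := ENNReal.toReal_nonneg

lemma Q_le_one (u : ℝ) : Q u ≤ 1 := by
  simpa [Q] using ENNReal.toReal_mono ENNReal.one_ne_top (prob_le_one (s := Set.Ici u))

section Averaging

variable {Ω : Type*} [MeasurableSpace Ω] {μ : Measure Ω} [IsFiniteMeasure μ] {f g : Ω → ℝ}

lemma integrable_Q_comp (hf : AEMeasurable f μ) : Integrable (fun ω => Q (f ω)) μ :=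
  (integrable_const (1 : ℝ)).mono' (Q_antitone.measurable.comp_aemeasurable hf).aestronglyMeasurable
    (ae_of_all _ fun ω => by simpa [abs_of_nonneg (Q_nonneg _)] using Q_le_one (f ω))

/-- Only `g` needs to be measurable: if `Q ∘ f` is not integrable, its integral is `0`. -/
lemma integral_Q_le_of_ae_le (hg : AEMeasurable g μ) (hgf : ∀ᵐ ω ∂μ, g ω ≤ f ω) :
    ∫ ω, Q (f ω) ∂μ ≤ ∫ ω, Q (g ω) ∂μ := by
  by_cases hf : Integrable (fun ω => Q (f ω)) μ
  · exact integral_mono_ae hf (integrable_Q_comp hg) (hgf.mono fun _ h => Q_antitone h)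
  · rw [integral_undef hf]
    exact integral_nonneg fun _ => Q_nonneg _

end Averaging

lemma sqrt_three_div_two_mul_sqrt_le {a b : ℝ} (ha : 0 ≤ a) (hb : 0 < b) :
    Real.sqrt 3 / 2 * Real.sqrt (b + 8 * a) ≤ (b + 2 * a) / Real.sqrt b := by
  rw [le_div_iff₀ (Real.sqrt_pos.mpr hb)]
  calc Real.sqrt 3 / 2 * Real.sqrt (b + 8 * a) * Real.sqrt b
      = Real.sqrt (3 * (b + 8 * a) * b) / 2 := by
        rw [Real.sqrt_mul (by positivity), Real.sqrt_mul (by norm_num)]; ring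
    _ ≤ Real.sqrt ((2 * (b + 2 * a)) ^ 2) / 2 := by
        gcongr; nlinarith [sq_nonneg (b - 4 * a)]
    _ = b + 2 * a := by rw [Real.sqrt_sq (by positivity)]; ring

theorem average_pep_loss_le_general (N : ℕ)
    (x xh : Fin N → Fin 4)
    (ν : Measure (Fin N → ℝ)) [IsProbabilityMeasure ν]
    (α β : (Fin N → ℝ) → ℝ)
    (hα : ∀ h, α h = ∑ k ∈ Finset.univ.filter (fun k =>
      (x k, xh k) = ((0 : Fin 4), (3 : Fin 4))
        ∨ (x k, xh k) = ((3 : Fin 4), (0 : Fin 4))), (h k) ^ 2)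
    (hβ : ∀ h, β h = ∑ k, (h k) ^ 2 * pw (x k) (xh k))
    (hae : ∀ᵐ h ∂ν, 0 < β h) (t : ℝ) (ht : 0 < t) :
    ∫ h, Q (t * ((β h + 2 * α h) / Real.sqrt (β h))) ∂ν
      ≤ ∫ h, Q (t * (Real.sqrt 3 / 2) * Real.sqrt (β h + 8 * α h)) ∂ν := by
  have hαm : Measurable α := by rw [funext hα]; fun_prop
  have hβm : Measurable β := by rw [funext hβ]; fun_prop
  refine integral_Q_le_of_ae_le (by fun_prop) ?_
  filter_upwards [hae] with h hβh
  have hαh : 0 ≤ α h := hα h ▸ sum_nonneg fun k _ => sq_nonneg (h k)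
  rw [mul_assoc]
  exact mul_le_mul_of_nonneg_left (sqrt_three_div_two_mul_sqrt_le hαh hβh) ht.le

/-- **Corollary: average pairwise loss over fading ≤ 1.25 dB.**
If the fading law `ν` gives `β_h > 0` almost surely, then for every SNR
parameter `t > 0` the average pairwise error probability of the bit-wise
decoder is at most that of the symbol-wise decoder with SNR reduced by the
factor `√3/2` (a 1.25 dB penalty). -/
theorem average_pep_loss_le (N : ℕ) (hN : 1 ≤ N)
    (x xh : Fin N → Fin 4) (hne : x ≠ xh)
    (ν : Measure (Fin N → ℝ)) [IsProbabilityMeasure ν]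
    (α β : (Fin N → ℝ) → ℝ)
    (hα : ∀ h, α h = ∑ k ∈ Finset.univ.filter (fun k =>
      (x k, xh k) = ((0 : Fin 4), (3 : Fin 4))
        ∨ (x k, xh k) = ((3 : Fin 4), (0 : Fin 4))), (h k) ^ 2)
    (hβ : ∀ h, β h = ∑ k, (h k) ^ 2 * pw (x k) (xh k))
    (hae : ∀ᵐ h ∂ν, 0 < β h) (t : ℝ) (ht : 0 < t) :
    ∫ h, Q (t * ((β h + 2 * α h) / Real.sqrt (β h))) ∂ν
      ≤ ∫ h, Q (t * (Real.sqrt 3 / 2) * Real.sqrt (β h + 8 * α h)) ∂ν :=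
  average_pep_loss_le_general N x xh ν α β hα hβ hae t ht

end
end
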